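/- arXiv:math/0608152 — 2 statements merged into one kernel-verified Lean document; each statement's English description precedes it below -/
import Mathlib

section
/- Let n ≥ 1 and let g_1,…,g_n be real constants. Define Q : ℝ^n × ℝ^{n−1} → ℝ by Q(z,x) = exp( g_1 e^{z_1} + Σ_{i=1}^{n−1} ( e^{x_i − z_i} + g_{i+1} e^{z_{i+1} − x_i} ) ). Then for all z ∈ ℝ^n, x ∈ ℝ^{n−1}: −(1/2) Σ_{i=1}^{n} ∂²Q/∂z_i² + [ (g_1/2)( e^{z_1} + g_1 e^{2 z_1} ) + Σ_{i=1}^{n−1} g_{i+1} e^{z_{i+1} − z_i} ] Q = −(1/2) Σ_{i=1}^{n−1} ∂²Q/∂x_i² + [ g_1 e^{x_1} + Σ_{i=1}^{n−2} g_{i+1} e^{x_{i+1} − x_i} ] Q. That is, Q intertwines the quadratic Hamiltonians of the BC_n and B_{n−1} open Toda chains. -/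
/-!
Write `u_i = e^{x_i - z_i}` and `v_i = g_{i+1} e^{z_{i+1} - x_i}`, so that
`Q = exp (g_1 e^{z_1} + Σ (u_i + v_i))`. In each single variable `y` the exponent has the form
`C + a e^y + b e^{-y}`, hence `∂²Q/∂y² = Q ((a e^y - b e^{-y})² + (a e^y + b e^{-y}))`.
In `z_j` the two terms are `A_j = (g_1 e^{z_1}, v_1, …, v_{n-1})_j` and
`B_j = (u_1, …, u_{n-1}, 0)_j`; in `x_i` they are `u_i` and `v_i`. After summing, the squares and
linear terms of the `u`'s and `v`'s cancel between the two sides, and what is left is twice the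
difference of the potentials: `u_i v_i = g_{i+1} e^{z_{i+1} - z_i}`, while in the products
`A_1 B_1 = g_1 e^{x_1}` and `A_{i+1} B_{i+1} = g_{i+1} e^{x_{i+1} - x_i}` the `z`'s cancel.
-/

open Real

/-- Second partial derivative of `f` in the `i`-th coordinate at `x`. -/
noncomputable def pd2 {k : ℕ} (f : (Fin k → ℝ) → ℝ) (i : Fin k) (x : Fin k → ℝ) : ℝ :=
  deriv (deriv (fun t : ℝ => f (Function.update x i t))) (x i)

/-- The elementary kernel intertwining the `BC_n` and `B_{n−1}` open Toda
chains (`n = m + 1 ≥ 1`):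
`Q(z,x) = exp( g_1 e^{z_1} + Σ_{i=1}^{n−1} ( e^{x_i − z_i} + g_{i+1} e^{z_{i+1} − x_i} ) )`. -/
noncomputable def Qker (m : ℕ) (g : Fin (m + 1) → ℝ)
    (z : Fin (m + 1) → ℝ) (x : Fin m → ℝ) : ℝ :=
  Real.exp (g 0 * Real.exp (z 0) + ∑ i : Fin m,
    (Real.exp (x i - z i.castSucc) + g i.succ * Real.exp (z i.succ - x i)))

open Finset Function

lemma hasDerivAt_mul_exp_add_mul_exp_neg (a b t : ℝ) :
    HasDerivAt (fun t => a * exp t + b * exp (-t)) (a * exp t - b * exp (-t)) t :=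
  (((hasDerivAt_exp t).const_mul a).add (((hasDerivAt_neg t).exp).const_mul b)).congr_deriv
    (by ring)

lemma deriv_deriv_exp_const_add_mul_exp_add_mul_exp_neg (c a b s : ℝ) :
    deriv (deriv fun t => exp (c + (a * exp t + b * exp (-t)))) s
      = exp (c + (a * exp s + b * exp (-s)))
        * ((a * exp s - b * exp (-s)) ^ 2 + (a * exp s + b * exp (-s))) := by
  have hf : ∀ t, HasDerivAt (fun t => exp (c + (a * exp t + b * exp (-t))))
      (exp (c + (a * exp t + b * exp (-t))) * (a * exp t - b * exp (-t))) t :=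
    fun t => ((hasDerivAt_mul_exp_add_mul_exp_neg a b t).const_add c).exp
  have hf' : HasDerivAt (fun t => a * exp t - b * exp (-t)) (a * exp s + b * exp (-s)) s := by
    simpa [sub_eq_add_neg] using hasDerivAt_mul_exp_add_mul_exp_neg a (-b) s
  rw [funext fun t => (hf t).deriv, (HasDerivAt.fun_mul (hf s) hf').deriv]
  ring

section LaurentExp

variable {k : ℕ}

noncomputable def laurentExp (c : ℝ) (a b y : Fin k → ℝ) : ℝ :=
  c + ∑ j, (a j * exp (y j) + b j * exp (-y j))

lemma laurentExp_update (c : ℝ) (a b y : Fin k → ℝ) (j : Fin k) (t : ℝ) :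
    laurentExp c a b (update y j t)
      = (laurentExp c a b y - (a j * exp (y j) + b j * exp (-y j)))
        + (a j * exp t + b j * exp (-t)) := by
  have hrest : ∑ l ∈ univ.erase j, (a l * exp (update y j t l) + b l * exp (-update y j t l))
      = ∑ l ∈ univ.erase j, (a l * exp (y l) + b l * exp (-y l)) :=
    sum_congr rfl fun l hl => by rw [update_of_ne (ne_of_mem_erase hl)]
  simp only [laurentExp, ← add_sum_erase _ _ (mem_univ j), hrest, update_self]
  ring

lemma pd2_exp_laurentExp (c : ℝ) (a b y : Fin k → ℝ) (j : Fin k) :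
    pd2 (fun y => exp (laurentExp c a b y)) j y
      = exp (laurentExp c a b y)
        * ((a j * exp (y j) - b j * exp (-y j)) ^ 2 + (a j * exp (y j) + b j * exp (-y j))) := by
  simp only [pd2, laurentExp_update]
  rw [deriv_deriv_exp_const_add_mul_exp_add_mul_exp_neg, sub_add_cancel]

end LaurentExp

section Algebra

variable {R : Type*} [CommRing R]

lemma sum_sq_sub_add_add {ι : Type*} [Fintype ι] (A B : ι → R) :
    ∑ j, ((A j - B j) ^ 2 + (A j + B j))
      = ∑ j, (A j ^ 2 + A j) + ∑ j, (B j ^ 2 + B j) - 2 * ∑ j, A j * B j := by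
  rw [mul_sum, ← sum_add_distrib, ← sum_sub_distrib]
  exact sum_congr rfl fun j _ => by ring

variable {m : ℕ}

lemma sum_cons_snoc_sq_sub_add_add (w : R) (u v : Fin m → R) :
    ∑ j, (((Fin.cons w v : Fin (m + 1) → R) j - (Fin.snoc u 0 : Fin (m + 1) → R) j) ^ 2
        + ((Fin.cons w v : Fin (m + 1) → R) j + (Fin.snoc u 0 : Fin (m + 1) → R) j))
      = ∑ i, ((u i - v i) ^ 2 + (u i + v i)) + (w ^ 2 + w)
        - 2 * ∑ j, (Fin.cons w v : Fin (m + 1) → R) j * (Fin.snoc u 0 : Fin (m + 1) → R) j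
        + 2 * ∑ i, u i * v i := by
  rw [sum_sq_sub_add_add, sum_sq_sub_add_add, Fin.sum_univ_succ, Fin.sum_univ_castSucc]
  simp only [Fin.cons_zero, Fin.cons_succ, Fin.snoc_castSucc, Fin.snoc_last]
  ring

lemma sum_cons_mul_snoc (w : R) (u v : Fin m → R) :
    ∑ j, (Fin.cons w v : Fin (m + 1) → R) j * (Fin.snoc u 0 : Fin (m + 1) → R) j
      = (if h : 0 < m then w * u ⟨0, h⟩ else 0)
        + ∑ i : Fin m, if h : (i : ℕ) + 1 < m then v i * u ⟨i + 1, h⟩ else 0 := by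
  rw [Fin.sum_univ_succ]
  congr 1
  · by_cases h : 0 < m <;> simp [Fin.snoc, Fin.castLT, h]
  · exact sum_congr rfl fun i _ => by
      by_cases h : (i : ℕ) + 1 < m <;> simp [Fin.snoc, Fin.castLT, h]

end Algebra

section Kernel

variable {m : ℕ} (g : Fin (m + 1) → ℝ) (z : Fin (m + 1) → ℝ) (x : Fin m → ℝ)

noncomputable def uTerm (i : Fin m) : ℝ := exp (x i - z i.castSucc)

noncomputable def vTerm (i : Fin m) : ℝ := g i.succ * exp (z i.succ - x i)

lemma Qker_eq_exp_laurentExp_z :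
    Qker m g z x = exp (laurentExp 0 (Fin.cons (g 0) fun i => g i.succ * exp (-x i))
      (Fin.snoc (fun i => exp (x i)) 0) z) := by
  rw [Qker, laurentExp]
  congr 1
  rw [sum_add_distrib, sum_add_distrib, Fin.sum_univ_succ, Fin.sum_univ_castSucc]
  simp only [Fin.cons_zero, Fin.cons_succ, Fin.snoc_castSucc, Fin.snoc_last, sub_eq_add_neg,
    exp_add, mul_comm, mul_left_comm]
  ring_nf

lemma Qker_eq_exp_laurentExp_x :
    Qker m g z x = exp (laurentExp (g 0 * exp (z 0)) (fun i => exp (-z i.castSucc))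
      (fun i => g i.succ * exp (z i.succ)) x) := by
  rw [Qker, laurentExp]
  congr 2
  refine sum_congr rfl fun i _ => ?_
  simp only [sub_eq_add_neg, exp_add]
  ring

lemma pd2_Qker_z (j : Fin (m + 1)) :
    pd2 (fun u => Qker m g u x) j z
      = Qker m g z x
        * (((Fin.cons (g 0 * exp (z 0)) (vTerm g z x) : Fin (m + 1) → ℝ) j
              - (Fin.snoc (uTerm z x) 0 : Fin (m + 1) → ℝ) j) ^ 2
          + ((Fin.cons (g 0 * exp (z 0)) (vTerm g z x) : Fin (m + 1) → ℝ) j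
              + (Fin.snoc (uTerm z x) 0 : Fin (m + 1) → ℝ) j)) := by
  have hplus : (Fin.cons (g 0) fun i => g i.succ * exp (-x i) : Fin (m + 1) → ℝ) j * exp (z j)
      = (Fin.cons (g 0 * exp (z 0)) (vTerm g z x) : Fin (m + 1) → ℝ) j := by
    induction j using Fin.cases with
    | zero => rfl
    | succ i => simp only [Fin.cons_succ, vTerm, sub_eq_add_neg, exp_add]; ring
  have hminus : (Fin.snoc (fun i => exp (x i)) 0 : Fin (m + 1) → ℝ) j * exp (-z j)
      = (Fin.snoc (uTerm z x) 0 : Fin (m + 1) → ℝ) j := by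
    induction j using Fin.lastCases with
    | last => simp only [Fin.snoc_last, zero_mul]
    | cast i => simp only [Fin.snoc_castSucc, uTerm, sub_eq_add_neg, exp_add]
  simp only [Qker_eq_exp_laurentExp_z g _ x]
  rw [pd2_exp_laurentExp, hplus, hminus]

lemma pd2_Qker_x (i : Fin m) :
    pd2 (fun v => Qker m g z v) i x
      = Qker m g z x * ((uTerm z x i - vTerm g z x i) ^ 2 + (uTerm z x i + vTerm g z x i)) := by
  have hplus : exp (-z i.castSucc) * exp (x i) = uTerm z x i := by
    rw [uTerm, ← exp_add, neg_add_eq_sub]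
  have hminus : g i.succ * exp (z i.succ) * exp (-x i) = vTerm g z x i := by
    rw [vTerm, mul_assoc, ← exp_add, ← sub_eq_add_neg]
  simp only [Qker_eq_exp_laurentExp_x g z]
  rw [pd2_exp_laurentExp, hplus, hminus]

lemma uTerm_mul_vTerm (i : Fin m) :
    uTerm z x i * vTerm g z x i = g i.succ * exp (z i.succ - z i.castSucc) := by
  rw [uTerm, vTerm, mul_left_comm, ← exp_add]
  congr 2
  ring

lemma mul_uTerm_zero (h : 0 < m) :
    g 0 * exp (z 0) * uTerm z x ⟨0, h⟩ = g 0 * exp (x ⟨0, h⟩) := by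
  have hcast : (⟨0, h⟩ : Fin m).castSucc = 0 := rfl
  rw [uTerm, hcast, mul_assoc, ← exp_add, add_sub_cancel]

lemma vTerm_mul_uTerm_succ (i : Fin m) (h : (i : ℕ) + 1 < m) :
    vTerm g z x i * uTerm z x ⟨i + 1, h⟩
      = g ⟨i + 1, Nat.succ_lt_succ i.isLt⟩ * exp (x ⟨i + 1, h⟩ - x i) := by
  have hcast : (⟨i + 1, h⟩ : Fin m).castSucc = i.succ := rfl
  rw [vTerm, uTerm, hcast, mul_assoc, ← exp_add]
  congr 2
  ring

end Kernel

/-- The kernel `Q` intertwines the quadratic Hamiltonians of the `BC_n` and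
`B_{n−1}` open Toda chains, `n = m + 1 ≥ 1` (for `n = 1` the potential terms of
the `B_0` Hamiltonian are absent). -/
theorem BC_B_intertwining (m : ℕ) (g : Fin (m + 1) → ℝ)
    (z : Fin (m + 1) → ℝ) (x : Fin m → ℝ) :
    -(1/2) * (∑ i : Fin (m + 1), pd2 (fun u => Qker m g u x) i z)
      + ((g 0 / 2) * (Real.exp (z 0) + g 0 * Real.exp (2 * z 0))
          + ∑ i : Fin m, g i.succ * Real.exp (z i.succ - z i.castSucc)) * Qker m g z x
    = -(1/2) * (∑ i : Fin m, pd2 (fun v => Qker m g z v) i x)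
      + ((if h : 0 < m then g 0 * Real.exp (x ⟨0, h⟩) else 0)
          + ∑ i : Fin m, (if h : (i : ℕ) + 1 < m then
              g ⟨(i : ℕ) + 1, Nat.succ_lt_succ i.isLt⟩
                * Real.exp (x ⟨(i : ℕ) + 1, h⟩ - x i) else 0)) * Qker m g z x := by
  have hsq : exp (2 * z 0) = exp (z 0) ^ 2 := by rw [sq, ← exp_add, two_mul]
  simp only [pd2_Qker_z, pd2_Qker_x, ← mul_sum, sum_cons_snoc_sq_sub_add_add, sum_cons_mul_snoc,
    mul_uTerm_zero, vTerm_mul_uTerm_succ, uTerm_mul_vTerm, hsq]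
  ring
end

section
/- Let g : ℕ → ℝ with g_i ≥ 0 (indices i ≥ 1), and let x, z : ℕ → ℝ. Assume the families indexed by i ≥ 1: (e^{z_i − x_i}), (g_{i+1} e^{x_{i+1} − z_i}), (g_{i+1} e^{x_{i+1} − x_i}), (g_{i+1} e^{z_{i+1} − z_i}), (e^{2(z_i − x_i)}), (g_{i+1}² e^{2(x_{i+1} − z_i)}) are summable. Then, with F = g_1 e^{x_1 + z_1} + Σ_{i≥1} ( e^{z_i − x_i} + g_{i+1} e^{x_{i+1} − z_i} ) and Q = exp F, the pointwise identity −(1/2) Σ_{i≥1} [ (∂F/∂x_i)² + ∂²F/∂x_i² ] Q + [ g_1 g_2 e^{x_1 + x_2} + Σ_{i≥1} g_{i+1} e^{x_{i+1} − x_i} ] Q = −(1/2) Σ_{i≥1} [ (∂F/∂z_i)² + ∂²F/∂z_i² ] Q + [ 2 g_1 e^{2 z_1} + Σ_{i≥1} g_{i+1} e^{z_{i+1} − z_i} ] Q holds (each coordinate enters only finitely many terms of F, so the indicated partial derivatives are finite sums of exponentials). This expresses that the kernel Q intertwines the D_∞ and C_∞ Toda chain Hamiltonians: H^{D_∞}(x)Q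 = H^{C_∞}(z)Q. -/
open Real

set_option maxHeartbeats 1000000 in
lemma toda_key (A : ℝ) (a b : ℕ → ℝ)
    (ha : Summable a) (hb : Summable b)
    (ha2 : Summable fun i => a i ^ 2) (hb2 : Summable fun i => b i ^ 2)
    (hab : Summable fun i => a i * b i)
    (ha1b : Summable fun i => a (i + 1) * b i) :
    -(1/2) * (∑' i : ℕ, (if i = 0 then (A - a 0) ^ 2 + (A + a 0)
        else (b (i-1) - a i) ^ 2 + b (i-1) + a i))
      + (A * b 0 + ∑' i : ℕ, a i * b i)
    = -(1/2) * (∑' i : ℕ, (if i = 0 then (A + a 0 - b 0) ^ 2 + (A + a 0 + b 0)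
        else (a i - b i) ^ 2 + a i + b i))
      + (2 * A * a 0 + ∑' i : ℕ, a (i + 1) * b i) := by
  have ha' : Summable (fun i => a (i+1)) := (summable_nat_add_iff 1).2 ha
  have ha2' : Summable (fun i => a (i+1) ^ 2) := (summable_nat_add_iff 1).2 ha2
  have hb' : Summable (fun i => b (i+1)) := (summable_nat_add_iff 1).2 hb
  have hb2' : Summable (fun i => b (i+1) ^ 2) := (summable_nat_add_iff 1).2 hb2
  have hab' : Summable (fun i => a (i+1) * b (i+1)) := (summable_nat_add_iff 1).2 hab
  -- T for the x-side tail
  have hTeq : (fun i : ℕ => (b i - a (i+1)) ^ 2 + b i + a (i+1))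
      = fun i => ((((b i ^ 2 + a (i+1) ^ 2) - 2 * (a (i+1) * b i)) + b i) + a (i+1)) := by
    funext i; ring
  have hTsum : Summable (fun i : ℕ => (b i - a (i+1)) ^ 2 + b i + a (i+1)) := by
    rw [hTeq]; exact (((hb2.add ha2').sub (ha1b.mul_left 2)).add hb).add ha'
  have hTval : ∑' i : ℕ, ((b i - a (i+1)) ^ 2 + b i + a (i+1))
      = (∑' i, b i ^ 2) + (∑' i, a (i+1) ^ 2) - 2 * (∑' i, a (i+1) * b i)
        + (∑' i, b i) + (∑' i, a (i+1)) := by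
    rw [hTeq, Summable.tsum_add (((hb2.add ha2').sub (ha1b.mul_left 2)).add hb) ha',
        Summable.tsum_add ((hb2.add ha2').sub (ha1b.mul_left 2)) hb,
        Summable.tsum_sub (hb2.add ha2') (ha1b.mul_left 2), Summable.tsum_add hb2 ha2', tsum_mul_left]
  -- U for the z-side tail
  have hUeq : (fun i : ℕ => (a (i+1) - b (i+1)) ^ 2 + a (i+1) + b (i+1))
      = fun i => ((((a (i+1) ^ 2 + b (i+1) ^ 2) - 2 * (a (i+1) * b (i+1))) + a (i+1)) + b (i+1)) := by
    funext i; ring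
  have hUsum : Summable (fun i : ℕ => (a (i+1) - b (i+1)) ^ 2 + a (i+1) + b (i+1)) := by
    rw [hUeq]; exact (((ha2'.add hb2').sub (hab'.mul_left 2)).add ha').add hb'
  have hUval : ∑' i : ℕ, ((a (i+1) - b (i+1)) ^ 2 + a (i+1) + b (i+1))
      = (∑' i, a (i+1) ^ 2) + (∑' i, b (i+1) ^ 2) - 2 * (∑' i, a (i+1) * b (i+1))
        + (∑' i, a (i+1)) + (∑' i, b (i+1)) := by
    rw [hUeq, Summable.tsum_add (((ha2'.add hb2').sub (hab'.mul_left 2)).add ha') hb',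
        Summable.tsum_add ((ha2'.add hb2').sub (hab'.mul_left 2)) ha',
        Summable.tsum_sub (ha2'.add hb2') (hab'.mul_left 2), Summable.tsum_add ha2' hb2', tsum_mul_left]
  -- the x-side full sum
  have hfxsum : Summable (fun i : ℕ => if i = 0 then (A - a 0) ^ 2 + (A + a 0)
      else (b (i-1) - a i) ^ 2 + b (i-1) + a i) := by
    apply (summable_nat_add_iff 1).1
    exact hTsum.congr fun i => by simp
  have hSx : (∑' i : ℕ, (if i = 0 then (A - a 0) ^ 2 + (A + a 0)
        else (b (i-1) - a i) ^ 2 + b (i-1) + a i))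
      = ((A - a 0) ^ 2 + (A + a 0))
        + ((∑' i, b i ^ 2) + (∑' i, a (i+1) ^ 2) - 2 * (∑' i, a (i+1) * b i)
          + (∑' i, b i) + (∑' i, a (i+1))) := by
    rw [Summable.tsum_eq_zero_add hfxsum]
    rw [show (∑' i : ℕ, (if i + 1 = 0 then (A - a 0) ^ 2 + (A + a 0)
        else (b (i+1-1) - a (i+1)) ^ 2 + b (i+1-1) + a (i+1)))
      = ∑' i : ℕ, ((b i - a (i+1)) ^ 2 + b i + a (i+1)) from tsum_congr fun i => by simp]
    rw [hTval]; simp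
  have hfzsum : Summable (fun i : ℕ => if i = 0 then (A + a 0 - b 0) ^ 2 + (A + a 0 + b 0)
      else (a i - b i) ^ 2 + a i + b i) := by
    apply (summable_nat_add_iff 1).1
    exact hUsum.congr fun i => by simp
  have hSz : (∑' i : ℕ, (if i = 0 then (A + a 0 - b 0) ^ 2 + (A + a 0 + b 0)
        else (a i - b i) ^ 2 + a i + b i))
      = ((A + a 0 - b 0) ^ 2 + (A + a 0 + b 0))
        + ((∑' i, a (i+1) ^ 2) + (∑' i, b (i+1) ^ 2) - 2 * (∑' i, a (i+1) * b (i+1))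
          + (∑' i, a (i+1)) + (∑' i, b (i+1))) := by
    rw [Summable.tsum_eq_zero_add hfzsum]
    rw [show (∑' i : ℕ, (if i + 1 = 0 then (A + a 0 - b 0) ^ 2 + (A + a 0 + b 0)
        else (a (i+1) - b (i+1)) ^ 2 + a (i+1) + b (i+1)))
      = ∑' i : ℕ, ((a (i+1) - b (i+1)) ^ 2 + a (i+1) + b (i+1)) from tsum_congr fun i => by simp]
    rw [hUval]; simp
  -- shifted-sum identities
  have sa : ∑' i, a (i+1) = (∑' i, a i) - a 0 := by
    have := Summable.tsum_eq_zero_add ha; linarith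
  have sa2 : ∑' i, a (i+1) ^ 2 = (∑' i, a i ^ 2) - a 0 ^ 2 := by
    have := Summable.tsum_eq_zero_add ha2; linarith
  have sb : ∑' i, b (i+1) = (∑' i, b i) - b 0 := by
    have := Summable.tsum_eq_zero_add hb; linarith
  have sb2 : ∑' i, b (i+1) ^ 2 = (∑' i, b i ^ 2) - b 0 ^ 2 := by
    have := Summable.tsum_eq_zero_add hb2; linarith
  have sab : ∑' i, a (i+1) * b (i+1) = (∑' i, a i * b i) - a 0 * b 0 := by
    have := Summable.tsum_eq_zero_add hab; linarith
  rw [hSx, hSz, sa, sa2, sb, sb2, sab]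
  ring


/-- Exponent of the kernel intertwining the `D_∞` and `C_∞` Toda chains:
`F = g_1 e^{x_1 + z_1} + Σ_{i≥1} ( e^{z_i − x_i} + g_{i+1} e^{x_{i+1} − z_i} )`
(indices are 0-based in Lean: math index `i ≥ 1` is Lean index `i − 1`). -/
noncomputable def Fexp (g x z : ℕ → ℝ) : ℝ :=
  g 0 * Real.exp (x 0 + z 0)
    + ∑' i : ℕ, (Real.exp (z i - x i) + g (i + 1) * Real.exp (x (i + 1) - z i))

set_option maxHeartbeats 1000000 in
/-- The kernel `Q = exp F` intertwines the `D_∞` and `C_∞` Toda chain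
Hamiltonians: `H^{D_∞}(x) Q = H^{C_∞}(z) Q`, written out using
`∂²Q/∂u² = ((∂F/∂u)² + ∂²F/∂u²) Q` and the explicit partial derivatives
`∂F/∂x_1 = g_1 e^{x_1+z_1} − e^{z_1−x_1}`,
`∂F/∂x_i = g_i e^{x_i−z_{i−1}} − e^{z_i−x_i}` for `i ≥ 2`,
`∂F/∂z_1 = g_1 e^{x_1+z_1} + e^{z_1−x_1} − g_2 e^{x_2−z_1}`,
`∂F/∂z_i = e^{z_i−x_i} − g_{i+1} e^{x_{i+1}−z_i}` for `i ≥ 2`,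
the second derivatives being the same with all plus signs. -/
theorem Dinf_Cinf_intertwining (g x z : ℕ → ℝ) (hg : ∀ i, 0 ≤ g i)
    (h1 : Summable fun i : ℕ => Real.exp (z i - x i))
    (h2 : Summable fun i : ℕ => g (i + 1) * Real.exp (x (i + 1) - z i))
    (h3 : Summable fun i : ℕ => g (i + 1) * Real.exp (x (i + 1) - x i))
    (h4 : Summable fun i : ℕ => g (i + 1) * Real.exp (z (i + 1) - z i))
    (h5 : Summable fun i : ℕ => Real.exp (2 * (z i - x i)))
    (h6 : Summable fun i : ℕ => (g (i + 1)) ^ 2 * Real.exp (2 * (x (i + 1) - z i))) :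
    -(1/2) * (∑' i : ℕ, (if i = 0 then
          (g 0 * Real.exp (x 0 + z 0) - Real.exp (z 0 - x 0)) ^ 2
            + (g 0 * Real.exp (x 0 + z 0) + Real.exp (z 0 - x 0))
        else
          (g i * Real.exp (x i - z (i - 1)) - Real.exp (z i - x i)) ^ 2
            + g i * Real.exp (x i - z (i - 1)) + Real.exp (z i - x i)))
        * Real.exp (Fexp g x z)
      + (g 0 * g 1 * Real.exp (x 0 + x 1)
          + ∑' i : ℕ, g (i + 1) * Real.exp (x (i + 1) - x i))
        * Real.exp (Fexp g x z)
    = -(1/2) * (∑' i : ℕ, (if i = 0 then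
          (g 0 * Real.exp (x 0 + z 0) + Real.exp (z 0 - x 0)
              - g 1 * Real.exp (x 1 - z 0)) ^ 2
            + (g 0 * Real.exp (x 0 + z 0) + Real.exp (z 0 - x 0)
              + g 1 * Real.exp (x 1 - z 0))
        else
          (Real.exp (z i - x i) - g (i + 1) * Real.exp (x (i + 1) - z i)) ^ 2
            + Real.exp (z i - x i) + g (i + 1) * Real.exp (x (i + 1) - z i)))
        * Real.exp (Fexp g x z)
      + (2 * g 0 * Real.exp (2 * z 0)
          + ∑' i : ℕ, g (i + 1) * Real.exp (z (i + 1) - z i))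
        * Real.exp (Fexp g x z) := by
  set a : ℕ → ℝ := fun i => Real.exp (z i - x i) with ha_def
  set b : ℕ → ℝ := fun i => g (i + 1) * Real.exp (x (i + 1) - z i) with hb_def
  set A : ℝ := g 0 * Real.exp (x 0 + z 0) with hA_def
  have hai : ∀ i, a i = Real.exp (z i - x i) := fun i => rfl
  have hbi : ∀ i, b i = g (i + 1) * Real.exp (x (i + 1) - z i) := fun i => rfl
  have ha : Summable a := h1
  have hb : Summable b := h2
  have ha2 : Summable fun i => a i ^ 2 := h5.congr fun i => by
    rw [hai, two_mul, Real.exp_add, ← pow_two]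
  have hb2 : Summable fun i => b i ^ 2 := h6.congr fun i => by
    rw [hbi, mul_pow, two_mul, Real.exp_add, ← pow_two]
  have eab : ∀ i, a i * b i = g (i + 1) * Real.exp (x (i + 1) - x i) := fun i => by
    rw [hai, hbi, show x (i+1) - x i = (z i - x i) + (x (i+1) - z i) by ring, Real.exp_add]
    ring
  have ea1b : ∀ i, a (i + 1) * b i = g (i + 1) * Real.exp (z (i + 1) - z i) := fun i => by
    rw [hai, hbi, show z (i+1) - z i = (z (i+1) - x (i+1)) + (x (i+1) - z i) by ring,
      Real.exp_add]
    ring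
  have hab : Summable fun i => a i * b i := h3.congr fun i => (eab i).symm
  have ha1b : Summable fun i => a (i + 1) * b i := h4.congr fun i => (ea1b i).symm
  have key := toda_key A a b ha hb ha2 hb2 hab ha1b
  -- rewrite goal tsums and scalars in terms of a, b, A
  have e1 : (∑' i : ℕ, (if i = 0 then (A - Real.exp (z 0 - x 0)) ^ 2
          + (A + Real.exp (z 0 - x 0))
        else (g i * Real.exp (x i - z (i - 1)) - Real.exp (z i - x i)) ^ 2
          + g i * Real.exp (x i - z (i - 1)) + Real.exp (z i - x i)))
      = ∑' i : ℕ, (if i = 0 then (A - a 0) ^ 2 + (A + a 0)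
          else (b (i-1) - a i) ^ 2 + b (i-1) + a i) := by
    refine tsum_congr fun i => ?_
    match i with
    | 0 => simp [hai]
    | (n+1) => simp [hai, hbi]
  have e2 : (∑' i : ℕ, g (i + 1) * Real.exp (x (i + 1) - x i)) = ∑' i : ℕ, a i * b i :=
    tsum_congr fun i => (eab i).symm
  have e3 : (∑' i : ℕ, (if i = 0 then (A + Real.exp (z 0 - x 0)
            - g 1 * Real.exp (x 1 - z 0)) ^ 2
          + (A + Real.exp (z 0 - x 0) + g 1 * Real.exp (x 1 - z 0))
        else (Real.exp (z i - x i) - g (i + 1) * Real.exp (x (i + 1) - z i)) ^ 2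
          + Real.exp (z i - x i) + g (i + 1) * Real.exp (x (i + 1) - z i)))
      = ∑' i : ℕ, (if i = 0 then (A + a 0 - b 0) ^ 2 + (A + a 0 + b 0)
          else (a i - b i) ^ 2 + a i + b i) := by
    refine tsum_congr fun i => ?_
    match i with
    | 0 => simp [hai, hbi]
    | (n+1) => simp [hai, hbi]
  have e4 : (∑' i : ℕ, g (i + 1) * Real.exp (z (i + 1) - z i)) = ∑' i : ℕ, a (i + 1) * b i :=
    tsum_congr fun i => (ea1b i).symm
  have e5 : g 0 * g 1 * Real.exp (x 0 + x 1) = A * b 0 := by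
    rw [hA_def, hbi, show x 0 + x 1 = (x 0 + z 0) + (x 1 - z 0) by ring, Real.exp_add]
    ring
  have e6 : 2 * g 0 * Real.exp (2 * z 0) = 2 * A * a 0 := by
    rw [hA_def, hai, show (2:ℝ) * z 0 = (x 0 + z 0) + (z 0 - x 0) by ring, Real.exp_add]
    ring
  rw [e1, e2, e3, e4, e5, e6]
  linear_combination Real.exp (Fexp g x z) * key
end
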